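/- Let X be a path-connected topological space, A ⊆ X a path-connected subspace, and f : X̃ → X a path-connected covering map such that Ã = f⁻¹(A) is path-connected and the inclusion-induced map π₁(Ã) → π₁(X̃) is an isomorphism. Then the inclusion-induced map π₁(A) → π₁(X) is an isomorphism. -/

import Mathlib

/-!
Restricting `f` over `A` gives a covering `Ã → A`, and together with the two inclusions the two
coverings form a commutative square on fundamental groups, with `π₁(Ã) ≅ π₁(X̃)` and
`π₁(X̃) → π₁(X)` injective. Monodromy is natural for this square. A loop in `A` that dies in `X`
therefore has trivial monodromy at `b₀` for `Ã → A`, so it comes from a loop in `Ã`, which dies in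
`X̃` and hence is trivial. Conversely, as `Ã` is path-connected, any loop `β` in `X` can be followed
by a loop in `A` bringing the endpoint of its lift back to `b₀`; the product then comes from
`π₁(X̃) = π₁(Ã)`, hence from `π₁(A)`.
-/

open CategoryTheory

/-- The homomorphism on fundamental groups induced by a continuous map. -/
noncomputable def π₁ind {X Y : Type} [TopologicalSpace X] [TopologicalSpace Y]
    (f : C(X, Y)) (x : X) : Aut (FundamentalGroupoid.mk x) →* Aut (FundamentalGroupoid.mk (f x)) :=
  Functor.mapAut (FundamentalGroupoid.mk x)
    (FundamentalGroupoid.fundamentalGroupoidFunctor.map (X := TopCat.of X) (Y := TopCat.of Y) (TopCat.ofHom f))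

theorem π₁ind_bijective_iff {X Y : Type} [TopologicalSpace X] [TopologicalSpace Y]
    (g : C(X, Y)) (x : X) :
    Function.Bijective (π₁ind g x) ↔ Function.Bijective (FundamentalGroup.map g x) := by
  let e₁ : Aut (FundamentalGroupoid.mk x) ≃ FundamentalGroup X x := Groupoid.isoEquivHom _ _
  let e₂ : Aut (FundamentalGroupoid.mk (g x)) ≃ FundamentalGroup Y (g x) :=
    Groupoid.isoEquivHom _ _
  rw [← e₂.comp_bijective, show e₂ ∘ π₁ind g x = FundamentalGroup.map g x ∘ e₁ from rfl,
    e₁.bijective_comp]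

namespace MonoidHom

variable {G H G' H' : Type*} [Group G] [Group H] [Group G'] [Group H']
  {ι : G' →* H'} {π : H' →* H} {κ : G' →* G} {φ : G →* H}

theorem injective_of_comp_eq_comp (comm : π.comp ι = φ.comp κ) (hι : Function.Injective ι)
    (hπ : Function.Injective π) (hker : φ.ker ≤ κ.range) : Function.Injective φ := by
  rw [injective_iff_map_eq_one]
  intro g hg
  obtain ⟨g', rfl⟩ := hker hg
  have hg' : π (ι g') = 1 := by rw [← comp_apply, comm, comp_apply]; exact hg
  rw [(map_eq_one_iff (π.comp ι) (hπ.comp hι)).mp hg', map_one]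

theorem surjective_of_comp_eq_comp (comm : π.comp ι = φ.comp κ) (hι : Function.Surjective ι)
    (hrange : ∀ h, ∃ g, φ g * h ∈ π.range) : Function.Surjective φ := by
  intro h
  obtain ⟨g, h', hh'⟩ := hrange h
  obtain ⟨g', rfl⟩ := hι h'
  refine ⟨g⁻¹ * κ g', ?_⟩
  rw [map_mul, map_inv, ← comp_apply φ κ, ← comm, comp_apply, hh', inv_mul_cancel_left]

end MonoidHom

namespace IsCoveringMap

variable {E X : Type*} [TopologicalSpace E] [TopologicalSpace X] {p : E → X}

theorem monodromy_map_eq_of_comp_eq {E' X' : Type*} [TopologicalSpace E'] [TopologicalSpace X']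
    {p' : E' → X'} (cov : IsCoveringMap p) (cov' : IsCoveringMap p') (g : C(E', E)) (h : C(X', X))
    (comm : ∀ e, p (g e) = h (p' e)) {x y : X'} (γ : Path.Homotopic.Quotient x y)
    (e : p' ⁻¹' {x}) :
    (cov.monodromy (γ.map h) ⟨g e, (comm e).trans (congrArg h (e.2 : p' e = x))⟩ : E) =
      g (cov'.monodromy γ e) := by
  induction γ with | mk γ =>
  have he : p (g e) = h x := (comm e).trans (congrArg h (e.2 : p' e = x))
  have hlift : g.comp (cov'.liftPath γ e (γ.source.trans (e.2 : p' e = x).symm)) =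
      cov.liftPath (γ.map h.continuous) (g e) ((γ.map h.continuous).source.trans he.symm) :=
    (cov.eq_liftPath_iff' _).mpr
      ⟨funext fun t => (comm _).trans congr(h $(congr_fun (cov'.liftPath_lifts ..) t)),
        congrArg g (cov'.liftPath_zero ..)⟩
  exact congr($hlift 1).symm

theorem mem_range_map_of_monodromy_eq (cov : IsCoveringMap p) {e : E}
    (γ : FundamentalGroup X (p e)) (h : cov.monodromy γ ⟨e, rfl⟩ = ⟨e, rfl⟩) :
    γ ∈ (FundamentalGroup.map ⟨p, cov.continuous⟩ e).range := by
  refine ⟨(cov.liftPathQuotient γ ⟨e, rfl⟩).cast rfl congr(($h).1).symm, ?_⟩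
  show Path.Homotopic.Quotient.map _ _ = _
  rw [Path.Homotopic.Quotient.map_cast, cov.map_liftPathQuotient]
  exact (Path.Homotopic.Quotient.cast_cast ..).trans (Path.Homotopic.Quotient.cast_rfl_rfl γ)

theorem exists_monodromy_eq [PathConnectedSpace E] (cov : IsCoveringMap p) {x : X}
    (e e' : p ⁻¹' {x}) : ∃ γ : FundamentalGroup X x, cov.monodromy γ e = e' :=
  let δ := Path.Homotopic.Quotient.mk (PathConnectedSpace.somePath e.1 e'.1)
  ⟨(δ.map ⟨p, cov.continuous⟩).cast e.2.symm e'.2.symm, cov.monodromy_eq_of_map_eq δ rfl⟩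

variable (cov : IsCoveringMap p) (A : Set X) (b : p ⁻¹' A)
include cov

theorem ker_map_subtypeVal_le_range_map_restrictPreimage :
    (FundamentalGroup.map (⟨Subtype.val, continuous_subtype_val⟩ : C(A, X))
        (A.restrictPreimage p b)).ker ≤
      (FundamentalGroup.map ((⟨p, cov.continuous⟩ : C(E, X)).restrictPreimage A) b).range := by
  intro α hα
  have hq := cov.restrictPreimage A
  refine hq.mem_range_map_of_monodromy_eq α (Subtype.ext (Subtype.ext ?_))
  refine (cov.monodromy_map_eq_of_comp_eq hq ⟨Subtype.val, continuous_subtype_val⟩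
    ⟨Subtype.val, continuous_subtype_val⟩ (fun _ => rfl) α ⟨b, rfl⟩).symm.trans ?_
  have hα' : Path.Homotopic.Quotient.map α (⟨Subtype.val, continuous_subtype_val⟩ : C(A, X)) =
      Path.Homotopic.Quotient.refl _ := hα
  rw [hα', cov.monodromy_refl]
  rfl

theorem exists_map_subtypeVal_mul_mem_range [PathConnectedSpace (p ⁻¹' A)]
    (β : FundamentalGroup X (A.restrictPreimage p b)) :
    ∃ σ : FundamentalGroup A (A.restrictPreimage p b),
      FundamentalGroup.map (⟨Subtype.val, continuous_subtype_val⟩ : C(A, X)) _ σ * β ∈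
        (FundamentalGroup.map ⟨p, cov.continuous⟩ b).range := by
  have hq := cov.restrictPreimage A
  set e := cov.monodromy β ⟨b, rfl⟩
  have he : (e : E) ∈ p ⁻¹' A := by
    show p e ∈ A
    rw [(e.2 : p e = p b)]
    exact b.2
  obtain ⟨σ, hσ⟩ := hq.exists_monodromy_eq (x := A.restrictPreimage p b)
    ⟨⟨e, he⟩, Subtype.ext e.2⟩ ⟨b, rfl⟩
  refine ⟨σ, cov.mem_range_map_of_monodromy_eq _ (Subtype.ext ?_)⟩
  refine (congrArg Subtype.val (cov.monodromy_trans_apply β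
    (FundamentalGroup.map (⟨Subtype.val, continuous_subtype_val⟩ : C(A, X)) _ σ) ⟨b, rfl⟩)).trans ?_
  exact (cov.monodromy_map_eq_of_comp_eq hq ⟨Subtype.val, continuous_subtype_val⟩
    ⟨Subtype.val, continuous_subtype_val⟩ (fun _ => rfl) σ _).trans congr(($hσ).1.1)

end IsCoveringMap

theorem stmt_2_general {X Xt : Type} [TopologicalSpace X] [TopologicalSpace Xt]
    (f : Xt → X) (hf : IsCoveringMap f)
    (A : Set X) (hAt : IsPathConnected (f ⁻¹' A))
    (a₀ : A) (b₀ : (f ⁻¹' A : Set Xt)) (hbase : f ↑b₀ = ↑a₀)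
    (hiso : Function.Bijective
      (π₁ind (⟨Subtype.val, continuous_subtype_val⟩ : C((f ⁻¹' A : Set Xt), Xt)) b₀)) :
    Function.Bijective (π₁ind (⟨Subtype.val, continuous_subtype_val⟩ : C(A, X)) a₀) := by
  obtain rfl : a₀ = A.restrictPreimage f b₀ := Subtype.ext hbase.symm
  have := isPathConnected_iff_pathConnectedSpace.mp hAt
  rw [π₁ind_bijective_iff] at hiso ⊢
  have comm : (FundamentalGroup.map ⟨f, hf.continuous⟩ b₀).comp
      (FundamentalGroup.map ⟨Subtype.val, continuous_subtype_val⟩ b₀) =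
      (FundamentalGroup.map ⟨Subtype.val, continuous_subtype_val⟩ _).comp
        (FundamentalGroup.map ((⟨f, hf.continuous⟩ : C(Xt, X)).restrictPreimage A) b₀) :=
    MonoidHom.ext fun γ => by obtain ⟨γ⟩ := γ; rfl
  exact ⟨MonoidHom.injective_of_comp_eq_comp comm hiso.1 (hf.injective_path_homotopic_map _ _)
      (hf.ker_map_subtypeVal_le_range_map_restrictPreimage A b₀),
    MonoidHom.surjective_of_comp_eq_comp comm hiso.2 (hf.exists_map_subtypeVal_mul_mem_range A b₀)⟩

/-- Statement: X path-connected, A ⊆ X path-connected, f : X̃ → X a covering with X̃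
path-connected, Ã = f⁻¹(A) path-connected, basepoints chosen compatibly, and the
inclusion Ã ↪ X̃ inducing an isomorphism on fundamental groups.  Then the inclusion
A ↪ X induces the stated property on fundamental groups. -/
theorem stmt_2 {X Xt : Type} [TopologicalSpace X] [TopologicalSpace Xt]
    [PathConnectedSpace X] [PathConnectedSpace Xt]
    (f : Xt → X) (hf : IsCoveringMap f)
    (A : Set X) (hA : IsPathConnected A) (hAt : IsPathConnected (f ⁻¹' A))
    (a₀ : A) (b₀ : (f ⁻¹' A : Set Xt)) (hbase : f ↑b₀ = ↑a₀)
    (hiso : Function.Bijective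
      (π₁ind (⟨Subtype.val, continuous_subtype_val⟩ : C((f ⁻¹' A : Set Xt), Xt)) b₀)) :
    Function.Bijective (π₁ind (⟨Subtype.val, continuous_subtype_val⟩ : C(A, X)) a₀) :=
  stmt_2_general f hf A hAt a₀ b₀ hbase hiso
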